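/- arXiv:1101.4176 — 3 statements merged into one kernel-verified Lean document; each statement's English description precedes it below -/
import Mathlib

section
/- Let {Λ_i}_{i∈ℕ} be a countable system of closed cones in ℝⁿ satisfying the conic qualification condition: whenever x*_i ∈ N(0;Λ_i) for all i ∈ ℕ and the series Σ_{i=1}^∞ x*_i converges to 0, then x*_i = 0 for all i ∈ ℕ. Then, with Λ := ∩_{i=1}^∞ Λ_i, every Fréchet normal to Λ at the origin satisfies N̂(0;Λ) ⊆ cl{Σ_{i∈I} x*_i | x*_i ∈ N(0;Λ_i), I a finite subset of ℕ}. -/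
open Filter Topology Set Metric

section Defs
variable {E : Type*} [NormedAddCommGroup E] [NormedSpace ℝ E]

/-- Bouligand–Severi contingent tangent cone. -/
def tcone (Ω : Set E) (x : E) : Set E :=
  {v | ∃ (t : ℕ → ℝ) (w : ℕ → E), (∀ k, 0 < t k) ∧
    Tendsto t atTop (nhds 0) ∧ Tendsto w atTop (nhds v) ∧ ∀ k, x + t k • w k ∈ Ω}
end Defs

section Defs2
variable {E F : Type*} [NormedAddCommGroup E] [InnerProductSpace ℝ E]
  [NormedAddCommGroup F] [InnerProductSpace ℝ F]

/-- Fréchet (regular/pre-) normal cone. -/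
def fnormal (Ω : Set E) (x : E) : Set E :=
  {v | ∀ ε > 0, ∃ δ > 0, ∀ u ∈ Ω, ‖u - x‖ < δ → (inner ℝ v (u - x) : ℝ) ≤ ε * ‖u - x‖}

/-- Limiting (Mordukhovich) normal cone. -/
def lnormal (Ω : Set E) (x : E) : Set E :=
  {v | ∃ xk vk : ℕ → E, (∀ k, xk k ∈ Ω) ∧ (∀ k, vk k ∈ fnormal Ω (xk k)) ∧
    Tendsto xk atTop (nhds x) ∧ Tendsto vk atTop (nhds v)}

/-- Normal cone of convex analysis. -/
def cnormal (Ω : Set E) (x : E) : Set E :=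
  {v | ∀ y ∈ Ω, (inner ℝ v (y - x) : ℝ) ≤ 0}

/-- All finite sums `∑_{i ∈ I} xᵢ` with `xᵢ ∈ Nc i`. -/
def finSums (Nc : ℕ → Set E) : Set E :=
  {v | ∃ (I : Finset ℕ) (xs : ℕ → E), (∀ i ∈ I, xs i ∈ Nc i) ∧ v = ∑ i ∈ I, xs i}

/-- Fréchet normal cone in a product of inner product spaces
(equivalently, w.r.t. the Euclidean product structure). -/
def fnormalP (Ω : Set (E × F)) (z : E × F) : Set (E × F) :=
  {v | ∀ ε > 0, ∃ δ > 0, ∀ u ∈ Ω, ‖u - z‖ < δ →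
    (inner ℝ v.1 (u.1 - z.1) : ℝ) + (inner ℝ v.2 (u.2 - z.2) : ℝ) ≤ ε * ‖u - z‖}

/-- Limiting normal cone in a product of inner product spaces. -/
def lnormalP (Ω : Set (E × F)) (z : E × F) : Set (E × F) :=
  {v | ∃ zk vk : ℕ → E × F, (∀ k, zk k ∈ Ω) ∧ (∀ k, vk k ∈ fnormalP Ω (zk k)) ∧
    Tendsto zk atTop (nhds z) ∧ Tendsto vk atTop (nhds v)}

/-- Epigraph of an extended-real-valued function. -/
def epiSet (φ : E → EReal) : Set (E × ℝ) := {p | φ p.1 ≤ (p.2 : EReal)}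

/-- Basic (limiting, Mordukhovich) subdifferential. -/
noncomputable def bsub (φ : E → EReal) (x : E) : Set E :=
  {v | (v, (-1 : ℝ)) ∈ lnormalP (epiSet φ) (x, (φ x).toReal)}

/-- Singular subdifferential. -/
noncomputable def ssub (φ : E → EReal) (x : E) : Set E :=
  {v | (v, (0 : ℝ)) ∈ lnormalP (epiSet φ) (x, (φ x).toReal)}

/-- Fréchet subdifferential. -/
def fsub (φ : E → EReal) (x : E) : Set E :=
  {v | ∀ ε > 0, ∃ δ > 0, ∀ u, ‖u - x‖ < δ →
    φ x + (((inner ℝ v (u - x) : ℝ) - ε * ‖u - x‖ : ℝ) : EReal) ≤ φ u}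

/-- Fréchet upper subdifferential `∂̂⁺φ(x) = −∂̂(−φ)(x)`. -/
def fsubUpper (φ : E → EReal) (x : E) : Set E := {v | -v ∈ fsub (fun u => -(φ u)) x}
end Defs2

/-!
For `ρ ≥ 0` and finite `I`, minimize `-⟪v, u⟫ + ρ ∑_{i ∈ I} d(u, Λᵢ)²` over the unit ball at `u₀`.
Replacing `d(u, Λᵢ)` by `‖u - wᵢ‖`, with `wᵢ` a nearest point of `Λᵢ` to `u₀`, gives a smooth
majorant touching at `u₀`, so the first-order condition on the ball holds for it:
`v = s + z` with `z` normal to the ball at `u₀` and `s = ∑ 2ρ (u₀ - wᵢ)` a finite sum of proximal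
normals. For cones these are limiting normals at `0`, and `⟪u₀ - wᵢ, u₀⟫ ≥ 0`, so
`‖v - s‖ ≤ ⟪z, u₀⟫ ≤ ⟪v, u₀⟫`. If `v` stays at distance `ε` from the finite sums, letting `ρ` and
`I` grow produces minimizers with `⟪v, u⟫ ≥ ε` and vanishing penalty; a limit point lies in
`⋂ Λᵢ` with `⟪v, ū⟫ ≥ ε > 0`, contradicting that Fréchet normals to a cone at its vertex are
polar to it.
-/

open scoped RealInnerProductSpace

section Metric
variable {α : Type*} [PseudoMetricSpace α]

lemma IsClosed.mem_of_tendsto_infDist {s : Set α} (hs : IsClosed s)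
    (hne : s.Nonempty) {u : ℕ → α} {x : α} (hu : Tendsto u atTop (𝓝 x))
    (hd : Tendsto (fun k => infDist (u k) s) atTop (𝓝 0)) : x ∈ s :=
  (hs.mem_iff_infDist_zero hne).2 <|
    tendsto_nhds_unique (((continuous_infDist_pt s).tendsto x).comp hu) hd

lemma tendsto_infDist_of_sum_sq_infDist_le {s : ℕ → Set α} {u : ℕ → α} {C : ℝ}
    (h : ∀ k : ℕ, ((k : ℝ) + 1) * ∑ j ∈ Finset.range (k + 1), infDist (u k) (s j) ^ 2 ≤ C)
    (i : ℕ) :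
    Tendsto (fun k => infDist (u k) (s i)) atTop (𝓝 0) := by
  have hsq : Tendsto (fun k => infDist (u k) (s i) ^ 2) atTop (𝓝 0) := by
    refine squeeze_zero' (Eventually.of_forall fun k => sq_nonneg _) ?_
      (by simpa using tendsto_one_div_add_atTop_nhds_zero_nat.const_mul C)
    filter_upwards [eventually_ge_atTop i] with k hk
    rw [← div_eq_mul_inv, le_div_iff₀' (by positivity)]
    calc ((k : ℝ) + 1) * infDist (u k) (s i) ^ 2
        ≤ ((k : ℝ) + 1) * ∑ j ∈ Finset.range (k + 1), infDist (u k) (s j) ^ 2 := by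
          gcongr
          exact Finset.single_le_sum (f := fun j => infDist (u k) (s j) ^ 2)
            (fun j _ => sq_nonneg _) (Finset.mem_range.2 (by omega))
      _ ≤ C := h k
  simpa [Real.sqrt_sq infDist_nonneg] using hsq.sqrt

end Metric

section FrechetNormals
variable {E : Type*} [NormedAddCommGroup E] [InnerProductSpace ℝ E]

def IsCone (Ω : Set E) : Prop := ∀ v ∈ Ω, ∀ c : ℝ, 0 ≤ c → c • v ∈ Ω

lemma isCone_iInter {ι : Sort*} {Λ : ι → Set E} (h : ∀ i, IsCone (Λ i)) : IsCone (⋂ i, Λ i) :=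
  fun v hv c hc => mem_iInter.2 fun i => h i v (mem_iInter.1 hv i) c hc

lemma zero_mem_fnormal (Ω : Set E) (x : E) : (0 : E) ∈ fnormal Ω x :=
  fun ε hε => ⟨1, one_pos, fun u _ _ => by rw [inner_zero_left]; positivity⟩

lemma smul_mem_fnormal {Ω : Set E} {x z : E} (hz : z ∈ fnormal Ω x) {c : ℝ} (hc : 0 ≤ c) :
    c • z ∈ fnormal Ω x := by
  rcases hc.eq_or_lt with rfl | hc
  · rw [zero_smul]; exact zero_mem_fnormal Ω x
  intro ε hε
  obtain ⟨δ, hδ, h⟩ := hz (ε / c) (by positivity)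
  refine ⟨δ, hδ, fun u hu hd => ?_⟩
  calc ⟪c • z, u - x⟫ = c * ⟪z, u - x⟫ := real_inner_smul_left _ _ _
    _ ≤ c * (ε / c * ‖u - x‖) := by gcongr; exact h u hu hd
    _ = ε * ‖u - x‖ := by field_simp

lemma sub_mem_fnormal_of_forall_norm_sub_le {Ω : Set E} {x w : E}
    (hw : ∀ u ∈ Ω, ‖x - w‖ ≤ ‖x - u‖) : x - w ∈ fnormal Ω w := by
  intro ε hε
  refine ⟨2 * ε, by positivity, fun u hu hd => ?_⟩
  have hexp : ‖x - u‖ ^ 2 = ‖x - w‖ ^ 2 - 2 * ⟪x - w, u - w⟫ + ‖u - w‖ ^ 2 := by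
    rw [show x - u = (x - w) - (u - w) by abel, norm_sub_sq_real]
  have hle : ‖x - w‖ ^ 2 ≤ ‖x - u‖ ^ 2 := by gcongr; exact hw u hu
  nlinarith [norm_nonneg (u - w)]

lemma inner_nonpos_of_mem_fnormal_of_mem_tcone {Ω : Set E} {x z d : E}
    (hz : z ∈ fnormal Ω x) (hd : d ∈ tcone Ω x) : ⟪z, d⟫ ≤ 0 := by
  obtain ⟨t, w, ht, ht0, hw, hmem⟩ := hd
  have hbound : ∀ ε > 0, ⟪z, d⟫ ≤ ε * ‖d‖ := by
    intro ε hε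
    obtain ⟨δ, hδ, h⟩ := hz ε hε
    have hsmall : Tendsto (fun k => ‖t k • w k‖) atTop (𝓝 0) := by
      simpa using (ht0.smul hw).norm
    refine le_of_tendsto_of_tendsto ((continuous_const.inner continuous_id).tendsto d |>.comp hw)
      ((hw.norm).const_mul ε) ?_
    filter_upwards [hsmall.eventually (gt_mem_nhds hδ)] with k hk
    have := h _ (hmem k) (by simpa using hk)
    rw [add_sub_cancel_left, real_inner_smul_right, norm_smul, Real.norm_of_nonneg (ht k).le,
      mul_left_comm] at this
    exact le_of_mul_le_mul_left this (ht k)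
  have hlim : Tendsto (fun ε : ℝ => ε * ‖d‖) (𝓝[>] 0) (𝓝 0) := by
    simpa using tendsto_nhdsWithin_of_tendsto_nhds ((continuous_mul_const ‖d‖).tendsto 0)
  exact ge_of_tendsto hlim (eventually_nhdsWithin_of_forall hbound)

lemma mem_tcone_of_forall_add_smul_mem {Ω : Set E} {x d : E}
    (h : ∀ t : ℝ, 0 < t → t ≤ 1 → x + t • d ∈ Ω) : d ∈ tcone Ω x := by
  refine ⟨fun k => 1 / ((k : ℝ) + 1), fun _ => d, fun k => by positivity,
    tendsto_one_div_add_atTop_nhds_zero_nat, tendsto_const_nhds, fun k => h _ (by positivity) ?_⟩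
  rw [div_le_one (by positivity)]
  linarith [k.cast_nonneg (α := ℝ)]

lemma IsCone.inner_nonpos_of_mem_fnormal_zero {Λ : Set E} (hΛ : IsCone Λ) {v u : E}
    (hv : v ∈ fnormal Λ 0) (hu : u ∈ Λ) : ⟪v, u⟫ ≤ 0 :=
  inner_nonpos_of_mem_fnormal_of_mem_tcone hv <|
    mem_tcone_of_forall_add_smul_mem fun t ht _ => by rw [zero_add]; exact hΛ u hu t ht.le

lemma IsCone.inner_nonneg_of_mem_fnormal {Λ : Set E} (hΛ : IsCone Λ) {w z : E}
    (hw : w ∈ Λ) (hz : z ∈ fnormal Λ w) : 0 ≤ ⟪z, w⟫ := by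
  have hdir : -w ∈ tcone Λ w := mem_tcone_of_forall_add_smul_mem fun t _ ht1 => by
    rw [show w + t • -w = (1 - t) • w by module]
    exact hΛ w hw _ (sub_nonneg.2 ht1)
  simpa using inner_nonpos_of_mem_fnormal_of_mem_tcone hz hdir

lemma IsCone.inner_sub_nonneg_of_sub_mem_fnormal {Λ : Set E} (hΛ : IsCone Λ) {u w : E}
    (hw : w ∈ Λ) (hz : u - w ∈ fnormal Λ w) : 0 ≤ ⟪u - w, u⟫ :=
  calc 0 ≤ ‖u - w‖ ^ 2 + ⟪u - w, w⟫ :=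
        add_nonneg (sq_nonneg _) (hΛ.inner_nonneg_of_mem_fnormal hw hz)
    _ = ⟪u - w, u⟫ := by rw [← real_inner_self_eq_norm_sq, ← inner_add_right, sub_add_cancel]

lemma IsCone.mem_fnormal_smul {Λ : Set E} (hΛ : IsCone Λ) {w z : E} (hz : z ∈ fnormal Λ w)
    {t : ℝ} (ht : 0 < t) : z ∈ fnormal Λ (t • w) := by
  intro ε hε
  obtain ⟨δ, hδ, h⟩ := hz ε hε
  refine ⟨t * δ, by positivity, fun u hu hd => ?_⟩
  have hsub : t⁻¹ • u - w = t⁻¹ • (u - t • w) := by rw [smul_sub, inv_smul_smul₀ ht.ne']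
  have hnorm : ‖t⁻¹ • u - w‖ = t⁻¹ * ‖u - t • w‖ := by
    rw [hsub, norm_smul, Real.norm_of_nonneg (inv_nonneg.2 ht.le)]
  have := h _ (hΛ u hu _ (inv_nonneg.2 ht.le)) (by rwa [hnorm, inv_mul_lt_iff₀ ht])
  rw [hnorm, hsub, real_inner_smul_right, mul_left_comm] at this
  exact le_of_mul_le_mul_left this (inv_pos.2 ht)

lemma IsCone.mem_lnormal_zero_of_mem_fnormal {Λ : Set E} (hΛ : IsCone Λ) {w z : E}
    (hw : w ∈ Λ) (hz : z ∈ fnormal Λ w) : z ∈ lnormal Λ 0 :=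
  ⟨fun k => (1 / ((k : ℝ) + 1)) • w, fun _ => z, fun k => hΛ w hw _ (by positivity),
    fun k => hΛ.mem_fnormal_smul hz (by positivity),
    by simpa using (tendsto_one_div_add_atTop_nhds_zero_nat (𝕜 := ℝ)).smul_const w,
    tendsto_const_nhds⟩

lemma norm_le_inner_of_mem_cnormal_closedBall {u z : E}
    (hz : z ∈ cnormal (closedBall (0 : E) 1) u) : ‖z‖ ≤ ⟪z, u⟫ := by
  have hmem : ‖z‖⁻¹ • z ∈ closedBall (0 : E) 1 := by
    rw [mem_closedBall_zero_iff, norm_smul, norm_inv, norm_norm]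
    exact inv_mul_le_one
  have := hz _ hmem
  rw [inner_sub_right, real_inner_smul_right, real_inner_self_eq_norm_sq] at this
  rcases eq_or_ne ‖z‖ 0 with h0 | h0
  · rw [h0]; linarith [show ⟪z, u⟫ = 0 by simp [norm_eq_zero.1 h0]]
  · field_simp at this; linarith

lemma mem_cnormal_of_isMinOn_of_hasFDerivAt {K : Set E} (hK : Convex ℝ K) {g : E → ℝ}
    {a x : E} (hx : x ∈ K) (hmin : IsMinOn g K x) (hg : HasFDerivAt g (innerSL ℝ a) x) :
    -a ∈ cnormal K x := fun y hy => by
  have := hmin.localize.hasFDerivWithinAt_nonneg hg.hasFDerivWithinAt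
    (sub_mem_posTangentConeAt_of_segment_subset (hK.segment_subset hx hy))
  rw [innerSL_apply_apply] at this
  rw [inner_neg_left]
  linarith

lemma norm_sub_sum_le_inner_of_isMinOn_closedBall {v u₀ : E} {w : ℕ → E} {I : Finset ℕ}
    {ρ : ℝ} (hu₀ : u₀ ∈ closedBall (0 : E) 1)
    (hmin : IsMinOn (fun u => -⟪v, u⟫ + ρ * ∑ i ∈ I, ‖u - w i‖ ^ 2) (closedBall 0 1) u₀) :
    ‖v - ∑ i ∈ I, (2 * ρ) • (u₀ - w i)‖ ≤ ⟪v - ∑ i ∈ I, (2 * ρ) • (u₀ - w i), u₀⟫ := by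
  refine norm_le_inner_of_mem_cnormal_closedBall ?_
  have hg : HasFDerivAt (fun u => -⟪v, u⟫ + ρ * ∑ i ∈ I, ‖u - w i‖ ^ 2)
      (innerSL ℝ (∑ i ∈ I, (2 * ρ) • (u₀ - w i) - v)) u₀ := by
    refine (((innerSL ℝ v).hasFDerivAt.neg).add ((HasFDerivAt.fun_sum (u := I) fun i _ =>
      ((hasFDerivAt_id u₀).sub_const (w i)).norm_sq).const_mul ρ)).congr_fderiv ?_
    ext h
    simp [Finset.mul_sum, ← mul_assoc, mul_comm ρ 2]
    ring
  simpa using mem_cnormal_of_isMinOn_of_hasFDerivAt (convex_closedBall 0 1) hu₀ hmin hg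

end FrechetNormals

lemma exists_norm_sub_le_inner_and_penalty_le_inner {E : Type*} [NormedAddCommGroup E]
    [InnerProductSpace ℝ E] [ProperSpace E] (Λ : ℕ → Set E) (hcl : ∀ i, IsClosed (Λ i))
    (h0 : ∀ i, (0 : E) ∈ Λ i) (hcone : ∀ i, IsCone (Λ i)) (v : E) (I : Finset ℕ) {ρ : ℝ}
    (hρ : 0 ≤ ρ) :
    ∃ u ∈ closedBall (0 : E) 1, ∃ s ∈ finSums (fun i => lnormal (Λ i) 0),
      ‖v - s‖ ≤ ⟪v, u⟫ ∧ ρ * ∑ i ∈ I, infDist u (Λ i) ^ 2 ≤ ⟪v, u⟫ := by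
  set f : E → ℝ := fun u => -⟪v, u⟫ + ρ * ∑ i ∈ I, infDist u (Λ i) ^ 2
  have hf : Continuous f := by
    have := fun i => continuous_infDist_pt (α := E) (Λ i)
    fun_prop
  obtain ⟨u₀, hu₀, hmin⟩ := (isCompact_closedBall (0 : E) 1).exists_isMinOn
    (nonempty_closedBall.2 zero_le_one) hf.continuousOn
  choose w hwΛ hw using fun i => (hcl i).exists_infDist_eq_dist ⟨0, h0 i⟩ u₀
  have hnear : ∀ i, ∀ u ∈ Λ i, ‖u₀ - w i‖ ≤ ‖u₀ - u‖ := fun i u hu => by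
    simpa only [← dist_eq_norm, ← hw i] using infDist_le_dist_of_mem hu
  -- `g` majorizes `f` and touches it at `u₀`, so `u₀` also minimizes the smooth function `g`.
  set g : E → ℝ := fun u => -⟪v, u⟫ + ρ * ∑ i ∈ I, ‖u - w i‖ ^ 2
  have hgmin : IsMinOn g (closedBall 0 1) u₀ := fun u hu => by
    have hfg : f u ≤ g u := by
      simp only [f, g]
      gcongr with i
      · exact infDist_nonneg
      · rw [← dist_eq_norm]; exact infDist_le_dist_of_mem (hwΛ i)
    have hfg₀ : f u₀ = g u₀ := by simp only [f, g, hw, dist_eq_norm]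
    exact hfg₀ ▸ (hmin hu).trans hfg
  set s := ∑ i ∈ I, (2 * ρ) • (u₀ - w i)
  have hprox : ∀ i, u₀ - w i ∈ fnormal (Λ i) (w i) := fun i =>
    sub_mem_fnormal_of_forall_norm_sub_le (hnear i)
  have hs : s ∈ finSums (fun i => lnormal (Λ i) 0) :=
    ⟨I, fun i => (2 * ρ) • (u₀ - w i), fun i _ => (hcone i).mem_lnormal_zero_of_mem_fnormal
      (hwΛ i) (smul_mem_fnormal (hprox i) (by positivity)), rfl⟩
  have hsu : 0 ≤ ⟪s, u₀⟫ := by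
    rw [sum_inner]
    refine Finset.sum_nonneg fun i _ => ?_
    rw [real_inner_smul_left]
    exact mul_nonneg (by positivity)
      ((hcone i).inner_sub_nonneg_of_sub_mem_fnormal (hwΛ i) (hprox i))
  refine ⟨u₀, hu₀, s, hs, ?_, ?_⟩
  · calc ‖v - s‖ ≤ ⟪v - s, u₀⟫ := norm_sub_sum_le_inner_of_isMinOn_closedBall hu₀ hgmin
      _ ≤ ⟪v, u₀⟫ := by rw [inner_sub_left]; linarith
  · have hf0 : f 0 = 0 := by simp [f, infDist_zero_of_mem, h0]
    have : f u₀ ≤ f 0 := hmin (mem_closedBall_self zero_le_one)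
    simp only [hf0, f] at this
    linarith

theorem frechet_normals_to_cone_intersections_general {n : ℕ}
    (Λ : ℕ → Set (EuclideanSpace ℝ (Fin n)))
    (hcl : ∀ i, IsClosed (Λ i))
    (hcone : ∀ i, (0 : EuclideanSpace ℝ (Fin n)) ∈ Λ i ∧
      ∀ v ∈ Λ i, ∀ c : ℝ, 0 ≤ c → c • v ∈ Λ i) :
    fnormal (⋂ i, Λ i) 0 ⊆ closure (finSums fun i => lnormal (Λ i) 0) := by
  intro v hv
  by_contra hvS
  obtain ⟨ε, hε, hsep⟩ : ∃ ε > 0, ∀ s ∈ finSums (fun i => lnormal (Λ i) 0), ε ≤ dist v s := by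
    simpa [Metric.mem_closure_iff] using hvS
  choose u hu s hs hdist hpen using fun k : ℕ =>
    exists_norm_sub_le_inner_and_penalty_le_inner Λ hcl (fun i => (hcone i).1)
      (fun i => (hcone i).2) v (Finset.range (k + 1)) (ρ := k + 1) (by positivity)
  have hpen' : ∀ k : ℕ,
      ((k : ℝ) + 1) * ∑ j ∈ Finset.range (k + 1), infDist (u k) (Λ j) ^ 2 ≤ ‖v‖ :=
    fun k => (hpen k).trans <| (real_inner_le_norm _ _).trans <|
      mul_le_of_le_one_right (norm_nonneg _) (mem_closedBall_zero_iff.1 (hu k))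
  obtain ⟨ū, -, φ, hφ, hlim⟩ := (isCompact_closedBall _ 1).tendsto_subseq hu
  have hmem : ū ∈ ⋂ i, Λ i := mem_iInter.2 fun i =>
    (hcl i).mem_of_tendsto_infDist ⟨0, (hcone i).1⟩ hlim <|
      (tendsto_infDist_of_sum_sq_infDist_le hpen' i).comp hφ.tendsto_atTop
  have hpos : ε ≤ ⟪v, ū⟫ :=
    ge_of_tendsto (((continuous_const.inner continuous_id).tendsto ū).comp hlim)
      (Eventually.of_forall fun k =>
        (hsep _ (hs _)).trans (by simpa [dist_eq_norm] using hdist _))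
  linarith [(isCone_iInter fun i => (hcone i).2).inner_nonpos_of_mem_fnormal_zero hv hmem]

/-- **Representation of Fréchet normals to countable cone intersections** (Theorem 2.2).
Under the conic qualification condition, every Fréchet normal to `Λ = ⋂ Λᵢ` at the
origin lies in the closure of the set of finite sums of limiting normals to the `Λᵢ`. -/
theorem frechet_normals_to_cone_intersections {n : ℕ}
    (Λ : ℕ → Set (EuclideanSpace ℝ (Fin n)))
    (hcl : ∀ i, IsClosed (Λ i))
    (hcone : ∀ i, (0 : EuclideanSpace ℝ (Fin n)) ∈ Λ i ∧
      ∀ v ∈ Λ i, ∀ c : ℝ, 0 ≤ c → c • v ∈ Λ i)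
    (hQC : ∀ xs : ℕ → EuclideanSpace ℝ (Fin n),
      (∀ i, xs i ∈ lnormal (Λ i) 0) →
      Tendsto (fun m => ∑ i ∈ Finset.range m, xs i) atTop (nhds 0) →
      ∀ i, xs i = 0) :
    fnormal (⋂ i, Λ i) 0 ⊆ closure (finSums fun i => lnormal (Λ i) 0) :=
  frechet_normals_to_cone_intersections_general Λ hcl hcone
end

section
/- Let {Ω_i}_{i∈ℕ} be a countable system of closed sets in ℝⁿ with intersection Ω := ∩_{i=1}^∞ Ω_i and let x̄ ∈ Ω. Assume: (1) the system is linearly regular at x̄, i.e., there are a neighborhood U of x̄ and C > 0 with dist(x;Ω) ≤ C sup_{i∈ℕ} dist(x;Ω_i) for all x ∈ U; (2) the family of distance functions {d_{Ω_i}}_{i∈ℕ} is equi-directionally differentiable at x̄. Then for every h ∈ ℝⁿ one has dist(h; T(x̄;Ω)) ≤ C sup_{i∈ℕ} dist(h; T(x̄;Ω_i)), and in particular the system {Ω_i}_{i∈ℕ} satisfies the CHIP at x̄, i.e., T(x̄; ∩_{i=1}^∞ Ω_i) = ∩_{i=1}^∞ T(x̄;Ω_i). -/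
open Filter Topology Set Metric

/-!
Uniform directional differentiability lets linear regularity pass to the limit `t ↓ 0`:
for small `t > 0` and all `i`, `d(x̄ + t h, Ωᵢ) ≤ t (d'ᵢ(h) + ε)` with
`d'ᵢ(h) ≤ dist(h, T(x̄; Ωᵢ))`, hence `d(x̄ + t h, Ω) ≤ C t (supᵢ dist(h, T(x̄; Ωᵢ)) + ε)`.
Rescaling almost nearest points of `Ω` by `t⁻¹` and extracting a convergent subsequence (finite dimension)
yields a tangent vector to `Ω` within `C supᵢ dist(h, T(x̄; Ωᵢ))` of `h`. When `h` lies in every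
`T(x̄; Ωᵢ)` that bound is `0`, which is the CHIP.
-/

section TangentCone

variable {E : Type*} [NormedAddCommGroup E] [NormedSpace ℝ E]

theorem zero_mem_tcone {S : Set E} {x : E} (hx : x ∈ S) : (0 : E) ∈ tcone S x :=
  ⟨fun k => 1 / (k + 1), fun _ => 0, fun k => by positivity,
    tendsto_one_div_add_atTop_nhds_zero_nat, tendsto_const_nhds, fun k => by simpa using hx⟩

theorem tcone_mono {S T : Set E} (hST : S ⊆ T) (x : E) : tcone S x ⊆ tcone T x :=
  fun _ ⟨t, w, ht, ht0, hw, hmem⟩ => ⟨t, w, ht, ht0, hw, fun k => hST (hmem k)⟩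

theorem dist_add_smul_add_smul {x h w : E} {t : ℝ} (ht : 0 ≤ t) :
    dist (x + t • h) (x + t • w) = t * dist h w := by
  rw [dist_add_left, dist_smul₀, Real.norm_of_nonneg ht]

theorem infDist_add_smul_le {S : Set E} {x h w : E} {t : ℝ} (ht : 0 ≤ t)
    (hw : x + t • w ∈ S) : infDist (x + t • h) S ≤ t * dist h w :=
  (infDist_le_dist_of_mem hw).trans_eq (dist_add_smul_add_smul ht)

theorem le_infDist_tcone_of_tendsto {S : Set E} {x h : E} (hx : x ∈ S) {d : ℝ}
    (hd : Tendsto (fun t => infDist (x + t • h) S / t) (𝓝[>] 0) (𝓝 d)) :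
    d ≤ infDist h (tcone S x) := by
  refine (le_infDist ⟨0, zero_mem_tcone hx⟩).2 fun v ⟨t, w, ht, ht0, hw, hmem⟩ => ?_
  have ht_within : Tendsto t atTop (𝓝[>] 0) :=
    tendsto_nhdsWithin_iff.2 ⟨ht0, Eventually.of_forall ht⟩
  refine le_of_tendsto_of_tendsto' (hd.comp ht_within) (tendsto_const_nhds.dist hw) fun k => ?_
  rw [Function.comp_apply, div_le_iff₀ (ht k), mul_comm]
  exact infDist_add_smul_le (ht k).le (hmem k)

theorem exists_mem_tcone_dist_le [ProperSpace E] {S : Set E} (hS : S.Nonempty) {x h : E} {M : ℝ}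
    (hM : ∀ ε > 0, ∀ᶠ t in 𝓝[>] 0, infDist (x + t • h) S ≤ t * (M + ε)) :
    ∃ a ∈ tcone S x, dist h a ≤ M := by
  have hε : ∀ k : ℕ, (0 : ℝ) < 1 / (k + 1) := fun k => by positivity
  have hstep : ∀ k : ℕ, ∃ t ∈ Ioo (0 : ℝ) (1 / (k + 1)), ∃ w, x + t • w ∈ S ∧
      dist h w < M + 1 / (k + 1) := fun k => by
    obtain ⟨t, hbound, ht⟩ := ((hM _ (half_pos (hε k))).and (Ioo_mem_nhdsGT (hε k))).exists
    have hlt : infDist (x + t • h) S < t * (M + 1 / (k + 1)) :=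
      hbound.trans_lt (mul_lt_mul_of_pos_left (by linarith [hε k]) ht.1)
    obtain ⟨y, hy, hdist⟩ := (infDist_lt_iff hS).1 hlt
    have hy_eq : x + t • t⁻¹ • (y - x) = y := by rw [smul_inv_smul₀ ht.1.ne', add_sub_cancel]
    refine ⟨t, ht, t⁻¹ • (y - x), hy_eq.symm ▸ hy, lt_of_mul_lt_mul_left ?_ ht.1.le⟩
    rwa [← dist_add_smul_add_smul ht.1.le, hy_eq]
  choose t ht w hw hdist using hstep
  have ht0 : Tendsto t atTop (𝓝 0) :=
    squeeze_zero (fun k => (ht k).1.le) (fun k => (ht k).2.le)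
      tendsto_one_div_add_atTop_nhds_zero_nat
  have hball : ∀ k, w k ∈ closedBall h (M + 1) := fun k => by
    rw [mem_closedBall, dist_comm]
    linarith [hdist k, (div_le_one_of_le₀ (by simp) (by positivity) : (1 : ℝ) / (k + 1) ≤ 1)]
  obtain ⟨a, -, φ, hφ, hwa⟩ := (isCompact_closedBall h (M + 1)).tendsto_subseq hball
  refine ⟨a, ⟨t ∘ φ, w ∘ φ, fun k => (ht _).1, ht0.comp hφ.tendsto_atTop, hwa, fun k => hw _⟩, ?_⟩
  have hbound : Tendsto (fun k => M + 1 / ((φ k : ℝ) + 1)) atTop (𝓝 M) := by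
    simpa using tendsto_const_nhds.add ((tendsto_one_div_add_atTop_nhds_zero_nat (𝕜 := ℝ)).comp
      hφ.tendsto_atTop)
  exact le_of_tendsto_of_tendsto' (tendsto_const_nhds.dist hwa) hbound fun k => (hdist _).le

theorem eventually_infDist_iInter_le {ι : Type*} [Nonempty ι] {Ω : ι → Set E} {x h : E}
    {C : ℝ} (hC : 0 < C) {U : Set E} (hU : U ∈ 𝓝 x)
    (hlinreg : ∀ y ∈ U, infDist y (⋂ i, Ω i) ≤ C * ⨆ i, infDist y (Ω i))
    {d : ι → ℝ} {M : ℝ} (hdM : ∀ i, d i ≤ M)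
    (hd : ∀ ε > 0, ∃ δ > 0, ∀ t : ℝ, 0 < t → t < δ → ∀ i,
      |infDist (x + t • h) (Ω i) / t - d i| ≤ ε) :
    ∀ ε > 0, ∀ᶠ t in 𝓝[>] 0, infDist (x + t • h) (⋂ i, Ω i) ≤ t * (C * M + ε) := by
  intro ε hε
  obtain ⟨δ, hδ, hq⟩ := hd (ε / C) (div_pos hε hC)
  have hline : Tendsto (fun t : ℝ => x + t • h) (𝓝[>] 0) (𝓝 x) :=
    ((by fun_prop : Continuous fun t : ℝ => x + t • h).tendsto' 0 x (by simp)).mono_left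
      nhdsWithin_le_nhds
  filter_upwards [Ioo_mem_nhdsGT hδ, hline.eventually_mem hU] with t ht htU
  have hsup : ⨆ i, infDist (x + t • h) (Ω i) ≤ t * (M + ε / C) := ciSup_le fun i => by
    have hqi := (abs_le.1 (hq t ht.1 ht.2 i)).2
    rw [sub_le_iff_le_add, div_le_iff₀ ht.1] at hqi
    nlinarith [hdM i, ht.1]
  calc infDist (x + t • h) (⋂ i, Ω i) ≤ C * ⨆ i, infDist (x + t • h) (Ω i) := hlinreg _ htU
    _ ≤ C * (t * (M + ε / C)) := by gcongr
    _ = t * (C * M + ε) := by field_simp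

end TangentCone

theorem tendsto_nhdsGT_of_forall_abs_sub_le {ι : Type*} (f : ℝ → ι → ℝ) {d : ι → ℝ}
    (hf : ∀ ε > 0, ∃ δ > 0, ∀ t : ℝ, 0 < t → t < δ → ∀ i, |f t i - d i| ≤ ε) (i : ι) :
    Tendsto (fun t => f t i) (𝓝[>] 0) (𝓝 (d i)) := by
  refine Metric.tendsto_nhdsWithin_nhds.2 fun ε hε => ?_
  obtain ⟨δ, hδ, hq⟩ := hf (ε / 2) (half_pos hε)
  refine ⟨δ, hδ, fun t (ht : 0 < t) htδ => ?_⟩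
  rw [Real.dist_0_eq_abs, abs_of_pos ht] at htδ
  exact (hq t ht htδ i).trans_lt (half_lt_self hε)

theorem CHIP_from_linear_regularity_general {n : ℕ}
    (Ω : ℕ → Set (EuclideanSpace ℝ (Fin n))) (xb : EuclideanSpace ℝ (Fin n))
    (hxb : ∀ i, xb ∈ Ω i)
    (C : ℝ) (hC : 0 < C) (U : Set (EuclideanSpace ℝ (Fin n))) (hU : U ∈ nhds xb)
    (hlinreg : ∀ x ∈ U, infDist x (⋂ i, Ω i) ≤ C * ⨆ i, infDist x (Ω i))
    (hequi : ∀ h : EuclideanSpace ℝ (Fin n), ∃ d : ℕ → ℝ, ∀ ε > 0, ∃ δ > 0,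
      ∀ t : ℝ, 0 < t → t < δ → ∀ i, |infDist (xb + t • h) (Ω i) / t - d i| ≤ ε) :
    (∀ h : EuclideanSpace ℝ (Fin n),
      infDist h (tcone (⋂ i, Ω i) xb) ≤ C * ⨆ i, infDist h (tcone (Ω i) xb)) ∧
    tcone (⋂ i, Ω i) xb = ⋂ i, tcone (Ω i) xb := by
  have hS : (⋂ i, Ω i).Nonempty := ⟨xb, mem_iInter.2 hxb⟩
  have hkey : ∀ h, ∃ a ∈ tcone (⋂ i, Ω i) xb,
      dist h a ≤ C * ⨆ i, infDist h (tcone (Ω i) xb) := by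
    intro h
    obtain ⟨d, hd⟩ := hequi h
    have hbdd : BddAbove (range fun i => infDist h (tcone (Ω i) xb)) :=
      ⟨‖h‖, by
        rintro _ ⟨i, rfl⟩
        simpa using infDist_le_dist_of_mem (x := h) (zero_mem_tcone (hxb i))⟩
    have hdM : ∀ i, d i ≤ ⨆ i, infDist h (tcone (Ω i) xb) := fun i =>
      (le_infDist_tcone_of_tendsto (hxb i) (tendsto_nhdsGT_of_forall_abs_sub_le
        (fun t i => infDist (xb + t • h) (Ω i) / t) hd i)).trans (le_ciSup hbdd i)
    exact exists_mem_tcone_dist_le hS (eventually_infDist_iInter_le hC hU hlinreg hdM hd)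
  refine ⟨fun h => ?_, subset_antisymm
    (subset_iInter fun i => tcone_mono (iInter_subset Ω i) xb) fun h hh => ?_⟩
  · obtain ⟨a, ha, hdist⟩ := hkey h
    exact (infDist_le_dist_of_mem ha).trans hdist
  · obtain ⟨a, ha, hdist⟩ := hkey h
    have hzero : ∀ i, infDist h (tcone (Ω i) xb) = 0 := fun i =>
      infDist_zero_of_mem (mem_iInter.1 hh i)
    simp only [hzero, ciSup_const, mul_zero] at hdist
    rwa [dist_le_zero.1 hdist]

/-- **Sufficient conditions for CHIP in terms of linear regularity** (Proposition 3.5).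
If the countable system of closed sets is linearly regular at `x̄` and the distance
functions are equi-directionally differentiable at `x̄`, then the corresponding estimate
holds for the tangent cones and, in particular, the system has the CHIP at `x̄`. -/
theorem CHIP_from_linear_regularity {n : ℕ}
    (Ω : ℕ → Set (EuclideanSpace ℝ (Fin n))) (xb : EuclideanSpace ℝ (Fin n))
    (hcl : ∀ i, IsClosed (Ω i)) (hxb : ∀ i, xb ∈ Ω i)
    (C : ℝ) (hC : 0 < C) (U : Set (EuclideanSpace ℝ (Fin n))) (hU : U ∈ nhds xb)
    (hlinreg : ∀ x ∈ U, infDist x (⋂ i, Ω i) ≤ C * ⨆ i, infDist x (Ω i))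
    (hequi : ∀ h : EuclideanSpace ℝ (Fin n), ∃ d : ℕ → ℝ, ∀ ε > 0, ∃ δ > 0,
      ∀ t : ℝ, 0 < t → t < δ → ∀ i, |infDist (xb + t • h) (Ω i) / t - d i| ≤ ε) :
    (∀ h : EuclideanSpace ℝ (Fin n),
      infDist h (tcone (⋂ i, Ω i) xb) ≤ C * ⨆ i, infDist h (tcone (Ω i) xb)) ∧
    tcone (⋂ i, Ω i) xb = ⋂ i, tcone (Ω i) xb :=
  CHIP_from_linear_regularity_general Ω xb hxb C hC U hU hlinreg hequi
end

section
/- Let {Ω_i}_{i∈ℕ} be a countable system of closed sets in ℝⁿ with Ω := ∩_{i=1}^∞ Ω_i and x̄ ∈ Ω. If the tangential rank of the intersection at x̄ is zero, ρ_Ω(x̄) = 0, then the system {Ω_i}_{i∈ℕ} has the CHIP at x̄, i.e., T(x̄; ∩_{i=1}^∞ Ω_i) = ∩_{i=1}^∞ T(x̄;Ω_i). -/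
open Filter Topology Set Metric

/-!
A tangent vector `v` common to all `Ωᵢ` is realised along `x̄ + tₖ wₖ ∈ Ωᵢ` for any single `i`.
Choosing `i` by the vanishing rank, each such point lies within `ε tₖ ‖wₖ‖` of `Ω`, so it can be
moved into `Ω` at the cost of changing `wₖ` by about `ε ‖v‖`; letting `ε → 0` realises `v` along `Ω`.
-/

section TangentCone

variable {E : Type*} [NormedAddCommGroup E] [NormedSpace ℝ E]

theorem tcone_mono_s6 {s s' : Set E} {x : E} (h : s ⊆ s') : tcone s x ⊆ tcone s' x :=
  fun _ ⟨t, w, ht, htt, hww, hmem⟩ => ⟨t, w, ht, htt, hww, fun k => h (hmem k)⟩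

theorem tcone_iInter_subset {ι : Sort*} (s : ι → Set E) (x : E) :
    tcone (⋂ i, s i) x ⊆ ⋂ i, tcone (s i) x :=
  subset_iInter fun i => tcone_mono_s6 (iInter_subset s i)

theorem mem_tcone_of_forall_exists {s : Set E} {x v : E}
    (h : ∀ ε > 0, ∃ t ∈ Ioo 0 ε, ∃ w ∈ ball v ε, x + t • w ∈ s) : v ∈ tcone s x := by
  choose t ht w hw hmem using fun k : ℕ => h (1 / (k + 1)) Nat.one_div_pos_of_nat
  refine ⟨t, w, fun k => (ht k).1, ?_, ?_, hmem⟩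
  · exact squeeze_zero (fun k => (ht k).1.le) (fun k => (ht k).2.le)
      tendsto_one_div_add_atTop_nhds_zero_nat
  · exact tendsto_iff_dist_tendsto_zero.2 <| squeeze_zero (fun _ => dist_nonneg)
      (fun k => (hw k).le) tendsto_one_div_add_atTop_nhds_zero_nat

theorem exists_add_smul_mem_of_infDist_lt {s : Set E} {x w : E} {t r : ℝ} (hs : s.Nonempty)
    (ht : 0 < t) (h : infDist (x + t • w) s < r * t) : ∃ w' ∈ ball w r, x + t • w' ∈ s := by
  obtain ⟨z, hz, hdist⟩ := (infDist_lt_iff hs).1 h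
  refine ⟨t⁻¹ • (z - x), ?_, by rwa [smul_inv_smul₀ ht.ne', add_sub_cancel]⟩
  have hdiff : t⁻¹ • (z - x) - w = t⁻¹ • (z - (x + t • w)) := by
    simp only [smul_sub, smul_add, inv_smul_smul₀ ht.ne']
    abel
  rw [mem_ball, dist_eq_norm, hdiff, norm_smul, norm_inv, Real.norm_of_nonneg ht.le,
    ← dist_eq_norm, dist_comm, inv_mul_lt_iff₀ ht, mul_comm]
  exact hdist

theorem exists_add_smul_mem_of_mem_tcone_of_infDist_le {s s' : Set E} {x v : E} {η δ ε : ℝ}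
    (hx : x ∈ s) (hv : v ∈ tcone s' x) (hη : 0 < η) (hδ : 0 < δ) (hε : 0 < ε)
    (hdist : ∀ y ∈ s', y ≠ x → ‖y - x‖ < δ → infDist y s ≤ η * ‖y - x‖) :
    ∃ t ∈ Ioo 0 ε, ∃ w ∈ ball v (η * (‖v‖ + 1) + ε), x + t • w ∈ s := by
  obtain ⟨t, w, ht, htt, hww, hmem⟩ := hv
  have hstep : Tendsto (fun k => t k • w k) atTop (𝓝 0) := by
    simpa only [zero_smul] using htt.smul hww
  obtain ⟨k, htk, hwk, hnorm, hsmall⟩ := ((htt.eventually_lt_const hε).and <|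
    (hww.eventually (ball_mem_nhds v hε)).and <|
    ((continuous_norm.tendsto v).comp hww |>.eventually_lt_const (lt_add_one ‖v‖)).and <|
    hstep.eventually (ball_mem_nhds 0 hδ)).exists
  rw [Function.comp_apply] at hnorm
  rw [dist_zero_right] at hsmall
  have hnear : infDist (x + t k • w k) s < η * (‖v‖ + 1) * t k := by
    have hle : infDist (x + t k • w k) s ≤ η * (t k * ‖w k‖) := by
      by_cases hzero : x + t k • w k = x
      · rw [hzero, infDist_zero_of_mem hx]
        exact mul_nonneg hη.le (mul_nonneg (ht k).le (norm_nonneg _))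
      · simpa [norm_smul, abs_of_pos (ht k)] using hdist _ (hmem k) hzero (by simpa using hsmall)
    calc infDist (x + t k • w k) s ≤ η * (t k * ‖w k‖) := hle
      _ < η * (t k * (‖v‖ + 1)) := by gcongr; exact ht k
      _ = η * (‖v‖ + 1) * t k := by ring
  obtain ⟨w', hw', hmem'⟩ := exists_add_smul_mem_of_infDist_lt ⟨x, hx⟩ (ht k) hnear
  refine ⟨t k, ⟨ht k, htk⟩, w', ?_, hmem'⟩
  calc dist w' v ≤ dist w' (w k) + dist (w k) v := dist_triangle _ _ _
    _ < η * (‖v‖ + 1) + ε := add_lt_add hw' hwk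

theorem mem_tcone_of_forall_infDist_le {ι : Sort*} {Ω : ι → Set E} {s : Set E} {x v : E}
    (hx : x ∈ s) (hv : ∀ i, v ∈ tcone (Ω i) x)
    (hrank : ∀ ε > (0 : ℝ), ∃ i, ∃ δ > (0 : ℝ), ∀ y ∈ Ω i, y ≠ x → ‖y - x‖ < δ →
      infDist y s ≤ ε * ‖y - x‖) :
    v ∈ tcone s x := by
  refine mem_tcone_of_forall_exists fun ε hε => ?_
  have hC : 0 < ‖v‖ + 1 := by positivity
  obtain ⟨i, δ, hδ, hdist⟩ := hrank (ε / 2 / (‖v‖ + 1)) (by positivity)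
  obtain ⟨t, ht, w, hw, hmem⟩ := exists_add_smul_mem_of_mem_tcone_of_infDist_le hx (hv i)
    (by positivity) hδ (half_pos hε) hdist
  refine ⟨t, ⟨ht.1, ht.2.trans (half_lt_self hε)⟩, w, ?_, hmem⟩
  rwa [div_mul_cancel₀ _ hC.ne', add_halves] at hw

end TangentCone

theorem CHIP_from_tangential_rank_general {n : ℕ}
    (Ω : ℕ → Set (EuclideanSpace ℝ (Fin n))) (xb : EuclideanSpace ℝ (Fin n))
    (hxb : ∀ i, xb ∈ Ω i)
    (hrank : ∀ ε > (0 : ℝ), ∃ i, ∃ δ > (0 : ℝ), ∀ x ∈ Ω i, x ≠ xb → ‖x - xb‖ < δ →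
      infDist x (⋂ j, Ω j) ≤ ε * ‖x - xb‖) :
    tcone (⋂ i, Ω i) xb = ⋂ i, tcone (Ω i) xb :=
  (tcone_iInter_subset Ω xb).antisymm fun _ hv =>
    mem_tcone_of_forall_infDist_le (mem_iInter.2 hxb) (mem_iInter.1 hv) hrank

/-- **Sufficient condition for CHIP via the tangential rank of the intersection**
(Proposition 3.7).  If `ρ_Ω(x̄) = 0` then the system `{Ωᵢ}` has the CHIP at `x̄`.
The vanishing of the tangential rank
`ρ_Ω(x̄) = inf_i limsup_{x→x̄, x∈Ωᵢ∖{x̄}} dist(x;Ω)/‖x−x̄‖` (with the convention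
`ρ_Ω(x̄)=0` when some `Ωᵢ = {x̄}`) is expressed in ε-δ form. -/
theorem CHIP_from_tangential_rank {n : ℕ}
    (Ω : ℕ → Set (EuclideanSpace ℝ (Fin n))) (xb : EuclideanSpace ℝ (Fin n))
    (hcl : ∀ i, IsClosed (Ω i)) (hxb : ∀ i, xb ∈ Ω i)
    (hrank : ∀ ε > (0 : ℝ), ∃ i, ∃ δ > (0 : ℝ), ∀ x ∈ Ω i, x ≠ xb → ‖x - xb‖ < δ →
      infDist x (⋂ j, Ω j) ≤ ε * ‖x - xb‖) :
    tcone (⋂ i, Ω i) xb = ⋂ i, tcone (Ω i) xb :=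
  CHIP_from_tangential_rank_general Ω xb hxb hrank
end
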